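/- arXiv:1912.05506 — 4 statements merged into one kernel-verified Lean document; each statement's English description precedes it below -/
import Mathlib

section
/- Let t ≥ 1 and let I be a finite set of size at least 4t. Suppose for each ordered pair (i,j) of distinct indices in {1,...,t+1} we have nonnegative integers A_{ij} ≤ |I| satisfying A_{ij} + A_{ji} ≤ |I| + 1 for all i ≠ j. Then (1/((t+1)·|I|^t)) · Σ_{i=1}^{t+1} Π_{j ≠ i} A_{ji} ≤ 1.5/(t+1). -/
/-!
Normalising `x i j = A i j / (|I| + 1)` gives nonnegative weights with `x i j + x j i ≤ 1`, and
for such weights `∑ i ∏_{j ≠ i} x j i ≤ 1`. This goes by induction, peeling off one index `a`: if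
`x a m` is the largest of the `x a i`, the terms of the other indices contribute at most `x a m`
times the inductive sum, and the term of `a` is at most its factor `x m a`, so the total is at
most `x a m + x m a ≤ 1`. Hence the sum of products is at most `(|I| + 1) ^ t`, and
`(n + 1) ^ t (n - t) ≤ n ^ (t + 1)` turns this into `(4/3) |I| ^ t` once `4 t ≤ |I|`.
-/

open Finset

theorem sum_prod_erase_le_one {R β : Type*} [CommRing R] [LinearOrder R] [IsStrictOrderedRing R]
    [DecidableEq β] (x : β → β → R) (s : Finset β)
    (hnonneg : ∀ i ∈ s, ∀ j ∈ s, i ≠ j → 0 ≤ x i j)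
    (hpair : ∀ i ∈ s, ∀ j ∈ s, i ≠ j → x i j + x j i ≤ 1) :
    ∑ i ∈ s, ∏ j ∈ s.erase i, x j i ≤ 1 := by
  induction s using Finset.induction_on with
  | empty => simp
  | insert a s ha ih =>
    rcases s.eq_empty_or_nonempty with rfl | hs
    · simp
    have hnonneg_a : ∀ i ∈ s, 0 ≤ x a i ∧ 0 ≤ x i a := fun i hi =>
      ⟨hnonneg a (mem_insert_self a s) i (mem_insert_of_mem hi) (ne_of_mem_of_not_mem hi ha).symm,
        hnonneg i (mem_insert_of_mem hi) a (mem_insert_self a s) (ne_of_mem_of_not_mem hi ha)⟩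
    have hpair_a : ∀ i ∈ s, x a i + x i a ≤ 1 := fun i hi =>
      hpair a (mem_insert_self a s) i (mem_insert_of_mem hi) (ne_of_mem_of_not_mem hi ha).symm
    have ih' := ih (fun i hi j hj => hnonneg i (mem_insert_of_mem hi) j (mem_insert_of_mem hj))
      (fun i hi j hj => hpair i (mem_insert_of_mem hi) j (mem_insert_of_mem hj))
    obtain ⟨m, hm, hmax⟩ := s.exists_max_image (x a) hs
    have hothers : ∑ i ∈ s, x a i * ∏ j ∈ s.erase i, x j i ≤ x a m := calc
      _ ≤ ∑ i ∈ s, x a m * ∏ j ∈ s.erase i, x j i :=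
          sum_le_sum fun i hi => mul_le_mul_of_nonneg_right (hmax i hi) <| prod_nonneg fun j hj =>
            hnonneg j (mem_insert_of_mem (mem_of_mem_erase hj)) i (mem_insert_of_mem hi)
              (ne_of_mem_erase hj)
      _ = x a m * ∑ i ∈ s, ∏ j ∈ s.erase i, x j i := (mul_sum ..).symm
      _ ≤ x a m := mul_le_of_le_one_right (hnonneg_a m hm).1 ih'
    have hpivot : ∏ j ∈ s, x j a ≤ x m a := by
      rw [← mul_prod_erase s _ hm]
      refine mul_le_of_le_one_right (hnonneg_a m hm).2 (prod_le_one (fun j hj => ?_) fun j hj => ?_)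
      · exact (hnonneg_a j (mem_of_mem_erase hj)).2
      · linarith [hpair_a j (mem_of_mem_erase hj), (hnonneg_a j (mem_of_mem_erase hj)).1]
    have hsplit : ∑ i ∈ s, ∏ j ∈ (insert a s).erase i, x j i
        = ∑ i ∈ s, x a i * ∏ j ∈ s.erase i, x j i := sum_congr rfl fun i hi => by
      rw [erase_insert_of_ne (ne_of_mem_of_not_mem hi ha).symm,
        prod_insert fun h => ha (mem_of_mem_erase h)]
    rw [sum_insert ha, erase_insert ha, hsplit]
    linarith [hpair_a m hm]

theorem add_one_pow_mul_sub_le_pow_succ {R : Type*} [CommRing R] [LinearOrder R]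
    [IsStrictOrderedRing R] {x : R} (hx : 0 ≤ x) (t : ℕ) :
    (x + 1) ^ t * (x - t) ≤ x ^ (t + 1) := by
  induction t with
  | zero => simp
  | succ t ih =>
    have hpow : 0 ≤ (x + 1) ^ t := by positivity
    calc (x + 1) ^ (t + 1) * (x - (t + 1 : ℕ))
        = x * ((x + 1) ^ t * (x - t)) - (t + 1) * (x + 1) ^ t := by push_cast; ring
      _ ≤ x * x ^ (t + 1) := by nlinarith [mul_le_mul_of_nonneg_left ih hx]
      _ = x ^ (t + 1 + 1) := by ring

theorem three_mul_add_one_pow_le {n t : ℕ} (h : 4 * t ≤ n) : 3 * (n + 1) ^ t ≤ 4 * n ^ t := by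
  rcases Nat.eq_zero_or_pos n with rfl | hn
  · obtain rfl : t = 0 := by omega
    simp
  have key := add_one_pow_mul_sub_le_pow_succ (Int.natCast_nonneg n) t
  have hmul : (n : ℤ) * (3 * (n + 1) ^ t) ≤ n * (4 * n ^ t) := by
    rw [pow_succ] at key
    have hpow : (0 : ℤ) ≤ (n + 1) ^ t := by positivity
    have ht : 4 * (t : ℤ) ≤ n := by exact_mod_cast h
    nlinarith
  exact_mod_cast le_of_mul_le_mul_left hmul (by exact_mod_cast hn)

theorem knockout_probability_bound_general (t : ℕ) {α : Type*} (I : Finset α)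
    (hI : 4 * t ≤ I.card) (A : Fin (t + 1) → Fin (t + 1) → ℕ)
    (hpair : ∀ i j, i ≠ j → A i j + A j i ≤ I.card + 1) :
    (1 / ((t + 1 : ℝ) * (I.card : ℝ) ^ t)) *
        ∑ i : Fin (t + 1), ∏ j ∈ Finset.univ.erase i, (A j i : ℝ) ≤
      1.5 / (t + 1 : ℝ) := by
  set n := I.card
  have hsum : ∑ i, ∏ j ∈ univ.erase i, (A j i : ℝ) ≤ ((n : ℝ) + 1) ^ t := by
    have hkey := sum_prod_erase_le_one (fun i j => (A i j : ℝ) / (n + 1)) univ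
      (fun i _ j _ _ => by positivity)
      (fun i _ j _ hij => by
        rw [← add_div, div_le_one (by positivity)]
        exact_mod_cast hpair i j hij)
    simp only [prod_div_distrib, prod_const, card_erase_of_mem (mem_univ _), card_univ,
      Fintype.card_fin, add_tsub_cancel_right, ← sum_div] at hkey
    rwa [div_le_one (by positivity)] at hkey
  have hpow : ((n : ℝ) + 1) ^ t ≤ 1.5 * n ^ t := by
    have h43 : (3 : ℝ) * (n + 1) ^ t ≤ 4 * n ^ t := by exact_mod_cast three_mul_add_one_pow_le hI
    linarith [pow_nonneg (Nat.cast_nonneg (α := ℝ) n) t]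
  calc 1 / ((t + 1 : ℝ) * (n : ℝ) ^ t) * ∑ i, ∏ j ∈ univ.erase i, (A j i : ℝ)
      ≤ 1 / ((t + 1 : ℝ) * (n : ℝ) ^ t) * (1.5 * n ^ t) := by
        gcongr
        exact hsum.trans hpow
    _ = 1.5 / (t + 1) * (n ^ t / n ^ t) := by rw [one_div_mul_eq_div, mul_div_mul_comm]
    _ ≤ 1.5 / (t + 1) := mul_le_of_le_one_right (by positivity) (div_self_le_one _)

/-- Let `t ≥ 1` and `I` a finite set with `|I| ≥ 4t`. If for each ordered pair of
distinct indices `i j` in `{1,...,t+1}` we have naturals `A i j ≤ |I|` with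
`A i j + A j i ≤ |I| + 1`, then
`(1/((t+1)·|I|^t)) · Σ_i Π_{j ≠ i} A j i ≤ 1.5/(t+1)`. -/
theorem knockout_probability_bound (t : ℕ) (ht : 1 ≤ t) {α : Type*} (I : Finset α)
    (hI : 4 * t ≤ I.card) (A : Fin (t + 1) → Fin (t + 1) → ℕ)
    (hA : ∀ i j, i ≠ j → A i j ≤ I.card)
    (hpair : ∀ i j, i ≠ j → A i j + A j i ≤ I.card + 1) :
    (1 / ((t + 1 : ℝ) * (I.card : ℝ) ^ t)) *
        ∑ i : Fin (t + 1), ∏ j ∈ Finset.univ.erase i, (A j i : ℝ) ≤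
      1.5 / (t + 1 : ℝ) :=
  knockout_probability_bound_general t I hI A hpair
end

section
/- Under the constraints A_{ij} + A_{ji} ≤ M + 1 and 0 ≤ A_{ij} ≤ M for all distinct i,j in {1,...,t+1}, the sum Σ_{i=1}^{t+1} Π_{j≠i} A_{ji} is at most (M+1)^t, i.e., it is maximized when for each pair one of A_{ij}, A_{ji} equals M+1 and the other equals 0 in a consistent tournament ordering. -/
open Finset

/-- The image of `Fin.succAbove k` on `univ` is `univ.erase k`. -/
lemma succAbove_image_univ (n : ℕ) (k : Fin (n + 1)) :
    (Finset.univ : Finset (Fin n)).image k.succAbove = Finset.univ.erase k := by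
  ext x
  simp only [mem_image, mem_univ, true_and, mem_erase, and_true]
  constructor
  · rintro ⟨i, rfl⟩; exact k.succAbove_ne i
  · intro hx; exact Fin.exists_succAbove_eq hx

/-- Auxiliary version of the main theorem, for all `t ≥ 0`, proved by induction. -/
lemma knockout_aux : ∀ (t M : ℕ), 1 ≤ M → ∀ A : Fin (t + 1) → Fin (t + 1) → ℝ,
    (∀ i j, i ≠ j → 0 ≤ A i j) → (∀ i j, i ≠ j → A i j ≤ M) →
    (∀ i j, i ≠ j → A i j + A j i ≤ (M : ℝ) + 1) →
    ∑ i : Fin (t + 1), ∏ j ∈ Finset.univ.erase i, A j i ≤ ((M : ℝ) + 1) ^ t := by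
  intro t
  induction t with
  | zero =>
    intro M hM A h0 hU hp
    have h : ∀ i : Fin 1, (Finset.univ.erase i : Finset (Fin 1)) = ∅ := by decide
    simp [h]
  | succ t ih =>
    intro M hM A h0 hU hp
    have key : ∀ k i0 : Fin (t + 2), k ≠ i0 →
        (∏ j ∈ (Finset.univ.erase k).erase i0, A j k ≤
          ∏ j ∈ (Finset.univ.erase k).erase i0, A j i0) →
        ∑ i : Fin (t + 2), ∏ j ∈ Finset.univ.erase i, A j i ≤ ((M : ℝ) + 1) ^ (t + 1) := by
      intro k i0 hki0 hc
      set P : Fin (t + 2) → ℝ := fun i => ∏ j ∈ Finset.univ.erase i, A j i with hP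
      set Q : Fin (t + 2) → ℝ := fun i => ∏ j ∈ (Finset.univ.erase i).erase k, A j i with hQ
      -- nonnegativity of Q
      have hQ0 : ∀ i, 0 ≤ Q i := by
        intro i
        apply Finset.prod_nonneg
        intro j hj
        have hji : j ≠ i := by
          simp only [mem_erase, mem_univ, and_true] at hj
          exact hj.2
        exact h0 j i hji
      -- split off the k-th term
      have hsplit : ∑ i : Fin (t + 2), P i = ∑ i ∈ Finset.univ.erase k, P i + P k :=
        (Finset.sum_erase_add _ _ (mem_univ k)).symm
      -- for i ≠ k, P i = A k i * Q i
      have hPi : ∀ i ∈ Finset.univ.erase k, P i = A k i * Q i := by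
        intro i hi
        have hik : i ≠ k := (mem_erase.mp hi).1
        have hk : k ∈ Finset.univ.erase i := by
          simp [Ne.symm hik]
        exact (Finset.mul_prod_erase _ _ hk).symm
      -- bound each term
      have hterm : ∀ i ∈ Finset.univ.erase k,
          P i ≤ ((M : ℝ) + 1) * Q i - A i k * Q i := by
        intro i hi
        have hik : i ≠ k := (mem_erase.mp hi).1
        rw [hPi i hi]
        have h1 : A k i ≤ (M : ℝ) + 1 - A i k := by
          have := hp i k hik
          linarith
        have := mul_le_mul_of_nonneg_right h1 (hQ0 i)
        nlinarith [hQ0 i]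
      -- sum of Q over erase k is at most (M+1)^t by induction hypothesis
      have hQsum : ∑ i ∈ Finset.univ.erase k, Q i ≤ ((M : ℝ) + 1) ^ t := by
        have hinj : Function.Injective k.succAbove := Fin.succAbove_right_injective
        have himg := succAbove_image_univ (t + 1) k
        rw [← himg, Finset.sum_image (fun x _ y _ h => hinj h)]
        set A' : Fin (t + 1) → Fin (t + 1) → ℝ :=
          fun i j => A (k.succAbove i) (k.succAbove j) with hA'
        have hQval : ∀ i' : Fin (t + 1),
            Q (k.succAbove i') = ∏ j' ∈ Finset.univ.erase i', A' j' i' := by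
          intro i'
          have hset : (Finset.univ.erase (k.succAbove i')).erase k =
              (Finset.univ.erase i').image k.succAbove := by
            rw [Finset.image_erase hinj, himg, Finset.erase_right_comm]
          simp only [hQ]
          rw [hset, Finset.prod_image (fun x _ y _ h => hinj h)]
        calc ∑ i' : Fin (t + 1), Q (k.succAbove i')
            = ∑ i' : Fin (t + 1), ∏ j' ∈ Finset.univ.erase i', A' j' i' := by
              exact Finset.sum_congr rfl fun i' _ => hQval i'
          _ ≤ ((M : ℝ) + 1) ^ t := by
              apply ih M hM A'
              · intro i j hij; exact h0 _ _ fun h => hij (hinj h)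
              · intro i j hij; exact hU _ _ fun h => hij (hinj h)
              · intro i j hij; exact hp _ _ fun h => hij (hinj h)
      -- P k ≤ A i0 k * Q i0
      have hi0mem : i0 ∈ Finset.univ.erase k := by simp [Ne.symm hki0]
      have hA0i0 : 0 ≤ A i0 k := h0 i0 k (Ne.symm hki0)
      have hPk : P k ≤ A i0 k * Q i0 := by
        have hi0k : i0 ∈ Finset.univ.erase k := hi0mem
        have hPk' : P k = A i0 k * ∏ j ∈ (Finset.univ.erase k).erase i0, A j k :=
          (Finset.mul_prod_erase _ _ hi0k).symm
        have hQi0 : Q i0 = ∏ j ∈ (Finset.univ.erase k).erase i0, A j i0 := by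
          simp only [hQ]
          rw [Finset.erase_right_comm]
        rw [hPk', hQi0]
        exact mul_le_mul_of_nonneg_left hc hA0i0
      -- single term lower bound for the subtracted sum
      have hsingle : A i0 k * Q i0 ≤ ∑ i ∈ Finset.univ.erase k, A i k * Q i := by
        apply Finset.single_le_sum (fun i hi => ?_) hi0mem
        have hik : i ≠ k := (mem_erase.mp hi).1
        exact mul_nonneg (h0 i k hik) (hQ0 i)
      -- put things together
      have hsum1 : ∑ i ∈ Finset.univ.erase k, P i ≤
          ((M : ℝ) + 1) * ∑ i ∈ Finset.univ.erase k, Q i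
            - ∑ i ∈ Finset.univ.erase k, A i k * Q i := by
        calc ∑ i ∈ Finset.univ.erase k, P i
            ≤ ∑ i ∈ Finset.univ.erase k, (((M : ℝ) + 1) * Q i - A i k * Q i) :=
              Finset.sum_le_sum hterm
          _ = ((M : ℝ) + 1) * ∑ i ∈ Finset.univ.erase k, Q i
                - ∑ i ∈ Finset.univ.erase k, A i k * Q i := by
              rw [Finset.sum_sub_distrib, Finset.mul_sum]
      have hfinal : ((M : ℝ) + 1) * ∑ i ∈ Finset.univ.erase k, Q i ≤
          ((M : ℝ) + 1) ^ (t + 1) := by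
        have hM1 : (0 : ℝ) ≤ (M : ℝ) + 1 := by positivity
        calc ((M : ℝ) + 1) * ∑ i ∈ Finset.univ.erase k, Q i
            ≤ ((M : ℝ) + 1) * ((M : ℝ) + 1) ^ t := mul_le_mul_of_nonneg_left hQsum hM1
          _ = ((M : ℝ) + 1) ^ (t + 1) := by ring
      linarith [hsplit, hsum1, hPk, hsingle, hfinal]
    have h01 : (0 : Fin (t + 2)) ≠ 1 := by
      intro h
      have := congrArg Fin.val h
      simp [Fin.val_zero, Fin.val_one] at this
    rcases le_total (∏ j ∈ (Finset.univ.erase (0 : Fin (t + 2))).erase 1, A j 0)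
        (∏ j ∈ (Finset.univ.erase (0 : Fin (t + 2))).erase 1, A j 1) with h | h
    · exact key 0 1 h01 h
    · apply key 1 0 (Ne.symm h01)
      rwa [Finset.erase_right_comm]

/-- Under constraints `A i j + A j i ≤ M + 1` and `0 ≤ A i j ≤ M` for distinct
`i j ∈ {1,...,t+1}` (with `t ≥ 1`, `M ≥ 1` integers and `A` real valued),
`Σ_{i} Π_{j ≠ i} A j i ≤ (M+1)^t`. -/
theorem knockout_sum_of_products_le (t M : ℕ) (ht : 1 ≤ t) (hM : 1 ≤ M)
    (A : Fin (t + 1) → Fin (t + 1) → ℝ)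
    (hA0 : ∀ i j, i ≠ j → 0 ≤ A i j)
    (hAM : ∀ i j, i ≠ j → A i j ≤ M)
    (hpair : ∀ i j, i ≠ j → A i j + A j i ≤ (M : ℝ) + 1) :
    ∑ i : Fin (t + 1), ∏ j ∈ Finset.univ.erase i, A j i ≤ ((M : ℝ) + 1) ^ t :=
  knockout_aux t M hM A hA0 hAM hpair
end

section
/- Suppose nonnegative sequences (y_r) and (z_r) satisfy the recurrences y_{r+1} ≤ (4/p_r)·(z_r + λ^r k^{c+r/2}) and z_{r+1} ≤ 2p_r·(y_r + 2λ^r n k^{c-r/2}) + z_r + λ^r k^{c+r/2}, where p_r = λ k^{r+1} (log n)/n, with initial values y_0 ≤ n and z_0 ≤ 1. If λ ≥ 4, k ≥ 2, and z_r ≤ 15 λ^r k^{c + (r+1)/2} log n, then y_{r+1} ≤ 4 λ^{r+1} n k^{c - (r+1)/2} and z_{r+1} ≤ 15 λ^{r+1} k^{c + 1 + r/2} log n. -/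
/-!
Put `a = k ^ (c + r / 2)` and `s = √k`. Every power of `k` in the statement is then `a * s`,
`a / k ^ r`, `a / k ^ r / s`, `a * k` or `k ^ r * k`, and after clearing the common factor
`λ ^ r * a` the two bounds reduce to `15 s log n + 1 ≤ λ² s log n` and
`15 s log n + 1 ≤ 3 λ k log n`. Both follow from `s log n ≥ 1`, `λ ≥ 4` and
`s ≥ √2 > 4 / 3`.
-/

open Real

lemma rpow_add_half {k : ℝ} (hk : 0 < k) (x : ℝ) : k ^ (x + 1 / 2) = k ^ x * √k := by
  rw [rpow_add hk, sqrt_eq_rpow]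

lemma rpow_sub_half {k : ℝ} (hk : 0 < k) (x : ℝ) : k ^ (x - 1 / 2) = k ^ x / √k := by
  rw [rpow_sub hk, sqrt_eq_rpow]

lemma one_le_sqrt_mul {k L : ℝ} (hk : 1 ≤ k) (hL : 1 ≤ L) : 1 ≤ √k * L :=
  one_le_mul_of_one_le_of_one_le (one_le_sqrt.mpr hk) hL

lemma recurrence_y_succ_le {n k L lam a z y' : ℝ} (r : ℕ) (hn : 0 < n) (hk : 2 ≤ k)
    (hL : 1 ≤ L) (ha : 0 ≤ a) (hlam : 4 ≤ lam)
    (hrec : y' ≤ 4 / (lam * (k ^ r * k) * L / n) * (z + lam ^ r * a))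
    (hz : z ≤ 15 * lam ^ r * (a * √k) * L) :
    y' ≤ 4 * lam ^ (r + 1) * n * (a / k ^ r / √k) := by
  have hs : 0 < √k := sqrt_pos.mpr (by linarith)
  have hsL : 1 ≤ √k * L := one_le_sqrt_mul (by linarith) hL
  have hk0 : 0 < k := by linarith
  have hL0 : 0 < L := by linarith
  calc y' ≤ 4 / (lam * (k ^ r * k) * L / n) * (15 * lam ^ r * (a * √k) * L + lam ^ r * a) :=
        hrec.trans (by gcongr)
    _ = 4 * lam ^ r * n * a * (15 * √k * L + 1) / (lam * k ^ r * k * L) := by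
        field_simp
    _ ≤ 4 * lam ^ r * n * a * (lam ^ 2 * √k * L) / (lam * k ^ r * k * L) := by
        gcongr
        have h16 : 16 ≤ lam ^ 2 := by nlinarith
        calc 15 * √k * L + 1 ≤ 16 * (√k * L) := by linarith
          _ ≤ lam ^ 2 * √k * L := by rw [mul_assoc _ √k]; gcongr
    _ = 4 * lam ^ (r + 1) * n * (a / k ^ r / √k) := by
        field_simp
        rw [sq_sqrt hk0.le]
        ring

lemma recurrence_z_succ_le {n k L lam a y z z' : ℝ} (r : ℕ) (hn : 0 < n) (hk : 2 ≤ k)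
    (hL : 1 ≤ L) (ha : 0 ≤ a) (hlam : 4 ≤ lam)
    (hrec : z' ≤ 2 * (lam * (k ^ r * k) * L / n) * (y + 2 * lam ^ r * n * (a / k ^ r)) + z +
      lam ^ r * a)
    (hy : y ≤ 4 * lam ^ r * n * (a / k ^ r)) (hz : z ≤ 15 * lam ^ r * (a * √k) * L) :
    z' ≤ 15 * lam ^ (r + 1) * (a * k) * L := by
  have hs : 0 < √k := sqrt_pos.mpr (by linarith)
  have hsL : 1 ≤ √k * L := one_le_sqrt_mul (by linarith) hL
  have hss : √k * √k = k := mul_self_sqrt (by linarith)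
  have hk0 : 0 < k := by linarith
  have hL0 : 0 < L := by linarith
  have hsplit : 2 * (lam * (k ^ r * k) * L / n) * (y + 2 * lam ^ r * n * (a / k ^ r)) ≤
      12 * lam ^ (r + 1) * (a * k) * L :=
    calc _ ≤ 2 * (lam * (k ^ r * k) * L / n) * (6 * lam ^ r * n * (a / k ^ r)) := by
          gcongr
          linarith
      _ = 12 * lam ^ (r + 1) * (a * k) * L := by
          field_simp
          ring
  have hs43 : 4 / 3 ≤ √k := by nlinarith
  have key : 15 * √k * L + 1 ≤ 3 * lam * k * L :=
    calc 15 * √k * L + 1 ≤ 12 * (4 / 3) * √k * L := by linarith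
      _ ≤ 12 * √k * √k * L := by gcongr
      _ ≤ 3 * lam * k * L := by rw [mul_assoc 12, hss]; gcongr; linarith
  have hkey := mul_le_mul_of_nonneg_left key (by positivity : 0 ≤ lam ^ r * a)
  rw [pow_succ] at hsplit ⊢
  linear_combination hrec + hsplit + hz + hkey

theorem recurrence_inductive_step_general (n k lam c : ℝ) (y z p : ℕ → ℝ) (r : ℕ)
    (hn : 2 ≤ n) (hlog : 1 ≤ Real.log n) (hlam : 4 ≤ lam) (hk : 2 ≤ k)
    (hp : ∀ s, p s = lam * k ^ ((s : ℝ) + 1) * Real.log n / n)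
    (hyrec : y (r + 1) ≤ (4 / p r) * (z r + lam ^ r * k ^ (c + (r : ℝ) / 2)))
    (hzrec : z (r + 1) ≤
      2 * p r * (y r + 2 * lam ^ r * n * k ^ (c - (r : ℝ) / 2)) + z r +
        lam ^ r * k ^ (c + (r : ℝ) / 2))
    (hyr : y r ≤ 4 * lam ^ r * n * k ^ (c - (r : ℝ) / 2))
    (hzr : z r ≤ 15 * lam ^ r * k ^ (c + ((r : ℝ) + 1) / 2) * Real.log n) :
    y (r + 1) ≤ 4 * lam ^ (r + 1) * n * k ^ (c - ((r : ℝ) + 1) / 2) ∧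
      z (r + 1) ≤ 15 * lam ^ (r + 1) * k ^ (c + 1 + (r : ℝ) / 2) * Real.log n := by
  have hk0 : 0 < k := by linarith
  have ha : 0 ≤ k ^ (c + (r : ℝ) / 2) := rpow_nonneg hk0.le _
  rw [hp, rpow_add_one hk0.ne', rpow_natCast] at hyrec hzrec
  rw [show c + ((r : ℝ) + 1) / 2 = c + r / 2 + 1 / 2 by ring, rpow_add_half hk0] at hzr
  rw [show c - (r : ℝ) / 2 = c + r / 2 - r by ring, rpow_sub_natCast hk0.ne'] at hzrec hyr
  rw [show c - ((r : ℝ) + 1) / 2 = c + r / 2 - r - 1 / 2 by ring, rpow_sub_half hk0,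
    rpow_sub_natCast hk0.ne', show c + 1 + (r : ℝ) / 2 = c + r / 2 + 1 by ring,
    rpow_add_one hk0.ne']
  exact ⟨recurrence_y_succ_le r (by linarith) hk hlog ha hlam hyrec hzr,
    recurrence_z_succ_le r (by linarith) hk hlog ha hlam hzrec hyr hzr⟩

open Real in
/-- Inductive step for the recurrences bounding the expected number of path-related
vertices `y r` and path-relevant subproblems `z r` at level `r`, where
`p r = λ k^(r+1) log n / n`. If `λ ≥ 4`, `k ≥ 2`, `n ≥ 2`, `log n ≥ 1`, `c ≥ 0`,
the sequences are nonnegative with `y 0 ≤ n`, `z 0 ≤ 1`, and the level-`r` bounds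
`y r ≤ 4 λ^r n k^(c - r/2)` and `z r ≤ 15 λ^r k^(c+(r+1)/2) log n` hold, then
`y (r+1) ≤ 4 λ^(r+1) n k^(c-(r+1)/2)` and `z (r+1) ≤ 15 λ^(r+1) k^(c+1+r/2) log n`. -/
theorem recurrence_inductive_step (n k lam c : ℝ) (y z p : ℕ → ℝ) (r : ℕ)
    (hn : 2 ≤ n) (hlog : 1 ≤ Real.log n) (hc : 0 ≤ c) (hlam : 4 ≤ lam) (hk : 2 ≤ k)
    (hy0 : y 0 ≤ n) (hz0 : z 0 ≤ 1)
    (hynn : ∀ s, 0 ≤ y s) (hznn : ∀ s, 0 ≤ z s)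
    (hp : ∀ s, p s = lam * k ^ ((s : ℝ) + 1) * Real.log n / n)
    (hyrec : y (r + 1) ≤ (4 / p r) * (z r + lam ^ r * k ^ (c + (r : ℝ) / 2)))
    (hzrec : z (r + 1) ≤
      2 * p r * (y r + 2 * lam ^ r * n * k ^ (c - (r : ℝ) / 2)) + z r +
        lam ^ r * k ^ (c + (r : ℝ) / 2))
    (hyr : y r ≤ 4 * lam ^ r * n * k ^ (c - (r : ℝ) / 2))
    (hzr : z r ≤ 15 * lam ^ r * k ^ (c + ((r : ℝ) + 1) / 2) * Real.log n) :
    y (r + 1) ≤ 4 * lam ^ (r + 1) * n * k ^ (c - ((r : ℝ) + 1) / 2) ∧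
      z (r + 1) ≤ 15 * lam ^ (r + 1) * k ^ (c + 1 + (r : ℝ) / 2) * Real.log n :=
  recurrence_inductive_step_general n k lam c y z p r hn hlog hlam hk hp hyrec hzrec hyr hzr
end

section
/- Suppose each pair of distinct elements u, w of a set T of t+1 elements has the property that for all but at most one 'interval scalar' σ in a finite set I, either u knocks out w or w knocks out u (as a symmetric relation depending on σ assigned to one of them). If t pivots are chosen uniformly at random from T with independent uniform scalars from I and |I| ≥ 4t, then the probability that the single leftover element is knocked out by none of the t pivots is at most (1/(t+1))·((|I|+1)/|I|)^t ≤ 1.5/(t+1). -/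
/-!
Once the leftover element `i` is fixed, the scalars of the other elements are independent, so the
number of surviving configurations factorizes as `N * ∏_{j ≠ i} S j i` with `S j i = ∑_σ χ j i σ`.
The pair hypothesis gives `S i j + S j i ≤ N + 1`, and for any fractional tournament `b`
(`b i j + b j i ≤ 1`) one has `∑_i ∏_{j ≠ i} b j i ≤ 1`: inserting a vertex `k`, the old terms gain
the factor `b k i ≤ b k m` for a maximiser `m`, while the new term is at most `b m k`.
Finally `((N + 1) / N) ^ t ≤ exp (t / N) ≤ 1 / (1 - t / N) ≤ 4 / 3`.
-/

open Finset

theorem sum_prod_erase_le_one_s17 {α : Type*} [DecidableEq α] (b : α → α → ℝ)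
    (h0 : ∀ i j, 0 ≤ b i j) (h1 : ∀ i j, b i j ≤ 1)
    (hpair : ∀ i j, i ≠ j → b i j + b j i ≤ 1) (S : Finset α) :
    ∑ i ∈ S, ∏ j ∈ S.erase i, b j i ≤ 1 := by
  induction S using Finset.induction_on with
  | empty => simp
  | @insert k S hk ih =>
    rcases S.eq_empty_or_nonempty with rfl | hne
    · simp
    rw [sum_insert hk, erase_insert hk]
    have hk' : ∀ i ∈ S, i ≠ k := fun i hi hik => hk (hik ▸ hi)
    obtain ⟨m, hm, hmax⟩ := S.exists_max_image (b k) hne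
    have hnew : ∏ j ∈ S, b j k ≤ b m k := by
      rw [← mul_prod_erase S _ hm]
      exact mul_le_of_le_one_right (h0 m k)
        (prod_le_one (fun j _ => h0 j k) (fun j _ => h1 j k))
    have hold : ∑ i ∈ S, ∏ j ∈ (insert k S).erase i, b j i ≤ b k m := calc
      ∑ i ∈ S, ∏ j ∈ (insert k S).erase i, b j i
          = ∑ i ∈ S, b k i * ∏ j ∈ S.erase i, b j i := by
        refine sum_congr rfl fun i hi => ?_
        rw [erase_insert_of_ne (hk' i hi).symm, prod_insert (fun h => hk (mem_of_mem_erase h))]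
      _ ≤ ∑ i ∈ S, b k m * ∏ j ∈ S.erase i, b j i :=
        sum_le_sum fun i hi => mul_le_mul_of_nonneg_right (hmax i hi)
          (prod_nonneg fun j _ => h0 j i)
      _ ≤ b k m := by
        rw [← mul_sum]; exact mul_le_of_le_one_right (h0 k m) ih
    linarith [hpair k m (hk' m hm).symm]

theorem sum_prod_erase_le_pow {α : Type*} [DecidableEq α] (b : α → α → ℝ) {c : ℝ} (hc : 0 < c)
    (h0 : ∀ i j, 0 ≤ b i j) (h1 : ∀ i j, b i j ≤ c)
    (hpair : ∀ i j, i ≠ j → b i j + b j i ≤ c) (S : Finset α) :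
    ∑ i ∈ S, ∏ j ∈ S.erase i, b j i ≤ c ^ (#S - 1) := by
  have key := sum_prod_erase_le_one_s17 (fun i j => b i j / c)
    (fun i j => div_nonneg (h0 i j) hc.le) (fun i j => (div_le_one hc).2 (h1 i j))
    (fun i j hij => by rw [← add_div, div_le_one hc]; exact hpair i j hij) S
  have hterm : ∀ i ∈ S, ∏ j ∈ S.erase i, b j i / c = (∏ j ∈ S.erase i, b j i) / c ^ (#S - 1) :=
    fun i hi => by rw [prod_div_distrib, prod_const, card_erase_of_mem hi]
  rwa [sum_congr rfl hterm, ← sum_div, div_le_one (pow_pos hc _)] at key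

theorem Fintype.sum_pi_prod_erase {ι κ R : Type*} [Fintype ι] [DecidableEq ι] [Fintype κ]
    [CommSemiring R] (f : ι → κ → R) (i : ι) :
    ∑ σ : ι → κ, ∏ j ∈ univ.erase i, f j (σ j) =
      Fintype.card κ * ∏ j ∈ univ.erase i, ∑ x, f j x := by
  set g : ι → κ → R := fun j x => if j = i then 1 else f j x
  have hg : ∀ σ : ι → κ, ∏ j ∈ univ.erase i, f j (σ j) = ∏ j, g j (σ j) := fun σ => by
    rw [← mul_prod_erase univ _ (mem_univ i)]
    simp only [g, if_pos rfl, one_mul]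
    exact Finset.prod_congr rfl fun j hj => (if_neg (ne_of_mem_erase hj)).symm
  simp only [hg]
  rw [← Fintype.prod_sum, ← mul_prod_erase univ _ (mem_univ i)]
  congr 1
  · simp [g]
  · exact Finset.prod_congr rfl fun j hj => by simp [g, ne_of_mem_erase hj]

theorem sum_add_sum_le_card_add_one {κ : Type*} [Fintype κ] (f g : κ → ℝ)
    (hf : ∀ x, f x = 0 ∨ f x = 1) (hg : ∀ x, g x = 0 ∨ g x = 1)
    (hboth : #{x | f x = 1 ∧ g x = 1} ≤ 1) :
    ∑ x, f x + ∑ x, g x ≤ Fintype.card κ + 1 := by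
  have hle : ∀ x, f x + g x ≤ 1 + if f x = 1 ∧ g x = 1 then 1 else 0 := fun x => by
    rcases hf x with h | h <;> rcases hg x with h' | h' <;> simp [h, h']
  calc ∑ x, f x + ∑ x, g x ≤ ∑ x, (1 + if f x = 1 ∧ g x = 1 then (1 : ℝ) else 0) := by
        rw [← sum_add_distrib]; exact sum_le_sum fun x _ => hle x
    _ ≤ Fintype.card κ + 1 := by
        rw [sum_add_distrib, sum_boole]
        simpa using (Nat.cast_le (α := ℝ)).2 hboth

theorem add_one_div_pow_le_four_thirds {t N : ℕ} (hN : 4 * t ≤ N) (hNpos : 0 < N) :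
    (((N : ℝ) + 1) / N) ^ t ≤ 4 / 3 := by
  have hNR : (0 : ℝ) < N := by exact_mod_cast hNpos
  have htN : (t : ℝ) / N ≤ 1 / 4 := by
    rw [div_le_div_iff₀ hNR (by norm_num)]; exact_mod_cast (by omega : t * 4 ≤ 1 * N)
  calc (((N : ℝ) + 1) / N) ^ t = (1 / N + 1) ^ t := by field_simp; ring
    _ ≤ Real.exp (1 / N) ^ t := by gcongr; exact Real.add_one_le_exp _
    _ = Real.exp (t / N) := by rw [← Real.exp_nat_mul]; ring_nf
    _ ≤ 1 / (1 - t / N) :=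
        Real.exp_bound_div_one_sub_of_interval (by positivity) (by linarith)
    _ ≤ 4 / 3 := by rw [div_le_div_iff₀ (by linarith) (by norm_num)]; linarith

theorem leftover_survival_probability_general (t N : ℕ) (hN : 4 * t ≤ N)
    (hNpos : 0 < N) (χ : Fin (t + 1) → Fin (t + 1) → Fin N → ℝ)
    (hχ01 : ∀ i j σ, χ i j σ = 0 ∨ χ i j σ = 1)
    (hpair : ∀ i j, i ≠ j →
      (Finset.univ.filter (fun σ => χ i j σ = 1 ∧ χ j i σ = 1)).card ≤ 1) :
    ((∑ i : Fin (t + 1), ∑ σ : Fin (t + 1) → Fin N,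
        ∏ j ∈ Finset.univ.erase i, χ j i (σ j)) /
      ((t + 1 : ℝ) * (N : ℝ) ^ (t + 1)) ≤
        (1 / (t + 1 : ℝ)) * (((N : ℝ) + 1) / N) ^ t) ∧
    ((1 / (t + 1 : ℝ)) * (((N : ℝ) + 1) / N) ^ t ≤ 1.5 / (t + 1 : ℝ)) := by
  have hχ0 : ∀ i j σ, 0 ≤ χ i j σ := fun i j σ => by rcases hχ01 i j σ with h | h <;> simp [h]
  have hχ1 : ∀ i j σ, χ i j σ ≤ 1 := fun i j σ => by rcases hχ01 i j σ with h | h <;> simp [h]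
  have hsurvive : ∑ i : Fin (t + 1), ∏ j ∈ univ.erase i, ∑ σ, χ j i σ ≤ ((N : ℝ) + 1) ^ t := by
    simpa using sum_prod_erase_le_pow (fun j i => ∑ σ, χ j i σ) (by positivity : (0 : ℝ) < N + 1)
      (fun j i => sum_nonneg fun σ _ => hχ0 j i σ)
      (fun j i => by grw [sum_le_sum fun σ _ => hχ1 j i σ]; simp)
      (fun i j hij => sum_add_sum_le_card_add_one _ _ (hχ01 i j) (hχ01 j i) (hpair i j hij)
        |>.trans_eq (by simp)) univ
  have hnum : ∑ i : Fin (t + 1), ∑ σ : Fin (t + 1) → Fin N, ∏ j ∈ univ.erase i, χ j i (σ j) ≤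
      N * ((N : ℝ) + 1) ^ t := by
    simp only [Fintype.sum_pi_prod_erase, ← mul_sum, Fintype.card_fin]
    exact mul_le_mul_of_nonneg_left hsurvive N.cast_nonneg
  refine ⟨?_, ?_⟩
  · rw [div_pow, show (1 / (t + 1 : ℝ)) * ((N + 1) ^ t / N ^ t) =
      N * (N + 1) ^ t / ((t + 1) * N ^ (t + 1)) by field_simp; ring]
    gcongr
  · rw [one_div_mul_eq_div]
    gcongr
    linarith [add_one_div_pow_le_four_thirds hN hNpos]

/-- Knock-out probability bound: let `T` have `t+1` elements (indexed by `Fin (t+1)`)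
and `I` have `N` scalars (indexed by `Fin N`), with `t ≥ 1` and `N ≥ 4t`. Let
`χ i j σ ∈ {0,1}` indicate that `i` with scalar `σ` fails to knock out `j`, and
suppose each unordered pair admits at most one scalar that fails both ways. If the
leftover element is uniform over `T` and the other elements get i.i.d. uniform
scalars from `I`, the probability that the leftover survives all the `t` pivots,
namely `(Σ_i Σ_{σ : Fin (t+1) → Fin N} Π_{j ≠ i} χ j i (σ j)) / ((t+1)·N^(t+1))`,
is at most `(1/(t+1))·((N+1)/N)^t ≤ 1.5/(t+1)`. -/
theorem leftover_survival_probability (t N : ℕ) (ht : 1 ≤ t) (hN : 4 * t ≤ N)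
    (hNpos : 0 < N) (χ : Fin (t + 1) → Fin (t + 1) → Fin N → ℝ)
    (hχ01 : ∀ i j σ, χ i j σ = 0 ∨ χ i j σ = 1)
    (hpair : ∀ i j, i ≠ j →
      (Finset.univ.filter (fun σ => χ i j σ = 1 ∧ χ j i σ = 1)).card ≤ 1) :
    ((∑ i : Fin (t + 1), ∑ σ : Fin (t + 1) → Fin N,
        ∏ j ∈ Finset.univ.erase i, χ j i (σ j)) /
      ((t + 1 : ℝ) * (N : ℝ) ^ (t + 1)) ≤
        (1 / (t + 1 : ℝ)) * (((N : ℝ) + 1) / N) ^ t) ∧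
    ((1 / (t + 1 : ℝ)) * (((N : ℝ) + 1) / N) ^ t ≤ 1.5 / (t + 1 : ℝ)) :=
  leftover_survival_probability_general t N hN hNpos χ hχ01 hpair
end
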